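/- arXiv:2007.01533 — 2 statements merged into one kernel-verified Lean document; each statement's English description precedes it below -/
import Mathlib

section
/- Let G=(V,E,w) be an edge-weighted graph with E≠∅ and let d be a positive real. If the density of the whole graph satisfies d(V) ≥ d, then there exists a nonempty subset S ⊆ V such that the induced subgraph G[S] is (⌊⌈d/w_max⌉/2⌋ + 1)-vertex-connected and every vertex of G[S] has weighted degree strictly greater than d in G[S]. -/
/-!
Mader's argument with weights. Put `m = ⌈d / w_max⌉` and `k = ⌊m / 2⌋ + 1`, and call `U` *rich* if
`|U| > m` and `w(U) ≥ d (|U| - ⌊m / 2⌋)`; the whole vertex set is rich. In a minimal rich `U`,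
deleting a vertex of weighted degree `≤ d` would leave a rich set, so all degrees exceed `d`
(hence every vertex has at least `m` neighbours). If `G[U]` had a separation `(A, B)` with
`|A ∩ B| < k`, then `w(U) ≤ w(A) + w(B)` and `|A| + |B| = |U| + |A ∩ B|` force `A` or `B`
to be rich as well, contradicting minimality.
-/

open Finset
open scoped Classical

noncomputable section

variable {V : Type*} [Fintype V] [DecidableEq V]

/-- The set of edges of `G` with both endpoints in `S`, i.e. the edge set `E(S)`
of the induced subgraph `G[S]`. -/
def edgesIn (G : SimpleGraph V) (S : Finset V) : Finset (Sym2 V) :=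
  Finset.univ.filter (fun e => e ∈ G.edgeSet ∧ ∀ v ∈ e, v ∈ S)

/-- `w(S)`: the total weight of the edges of the induced subgraph `G[S]`. -/
def wsum (G : SimpleGraph V) (w : Sym2 V → ℝ) (S : Finset V) : ℝ :=
  ∑ e ∈ edgesIn G S, w e

/-- The density `d(S) = w(S)/|S|` of the induced subgraph `G[S]`. -/
def density (G : SimpleGraph V) (w : Sym2 V → ℝ) (S : Finset V) : ℝ :=
  wsum G w S / S.card

/-- The weighted degree of a vertex `v` in the induced subgraph `G[S]`. -/
def wdeg (G : SimpleGraph V) (w : Sym2 V → ℝ) (S : Finset V) (v : V) : ℝ :=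
  ∑ e ∈ (edgesIn G S).filter (fun e => v ∈ e), w e

/-- `G[S]` is `k`-vertex-connected: it has at least `k+1` vertices, and deleting any set
of fewer than `k` vertices leaves a connected graph. -/
def VertexConnected (G : SimpleGraph V) (S : Finset V) (k : ℕ) : Prop :=
  k + 1 ≤ S.card ∧ ∀ D : Finset V, D ⊆ S → D.card < k →
    (G.induce ((S \ D : Finset V) : Set V)).Connected

variable {G : SimpleGraph V} {w : Sym2 V → ℝ} {S U A B : Finset V} {W d : ℝ} {k : ℕ}

def incidentEdges (G : SimpleGraph V) (S : Finset V) (v : V) : Finset (Sym2 V) :=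
  (edgesIn G S).filter (fun e => v ∈ e)

lemma mem_edgesIn {e : Sym2 V} : e ∈ edgesIn G S ↔ e ∈ G.edgeSet ∧ ∀ v ∈ e, v ∈ S := by
  simp [edgesIn]

lemma mk_mem_edgesIn {p q : V} : s(p, q) ∈ edgesIn G S ↔ G.Adj p q ∧ p ∈ S ∧ q ∈ S := by
  simp [mem_edgesIn]

lemma edgesIn_mono (h : S ⊆ U) : edgesIn G S ⊆ edgesIn G U := fun _ he =>
  mem_edgesIn.mpr ⟨(mem_edgesIn.mp he).1, fun v hv => h ((mem_edgesIn.mp he).2 v hv)⟩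

lemma wsum_erase (v : V) : wsum G w (S.erase v) = wsum G w S - wdeg G w S v := by
  have : edgesIn G (S.erase v) = (edgesIn G S).filter (fun e => v ∉ e) := by
    ext e
    simp only [mem_edgesIn, mem_filter, mem_erase]
    exact ⟨fun h => ⟨⟨h.1, fun u hu => (h.2 u hu).2⟩, fun hv => (h.2 v hv).1 rfl⟩,
      fun h => ⟨h.1.1, fun u hu => ⟨fun huv => h.2 (huv ▸ hu), h.1.2 u hu⟩⟩⟩
  rw [wsum, this, wsum, wdeg, eq_sub_iff_add_eq, add_comm, sum_filter_add_sum_filter_not]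

lemma wsum_le_add_of_subset_union (hw : ∀ e ∈ G.edgeSet, 0 ≤ w e)
    (h : edgesIn G S ⊆ edgesIn G A ∪ edgesIn G B) :
    wsum G w S ≤ wsum G w A + wsum G w B := by
  have hw' : ∀ e ∈ edgesIn G A ∪ edgesIn G B, 0 ≤ w e := fun e he => by
    rcases mem_union.mp he with he | he <;> exact hw e (mem_edgesIn.mp he).1
  calc wsum G w S ≤ ∑ e ∈ edgesIn G A ∪ edgesIn G B, w e :=
        sum_le_sum_of_subset_of_nonneg h fun e he _ => hw' e he
    _ ≤ wsum G w A + wsum G w B := by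
        rw [wsum, wsum, ← sum_union_inter]
        exact le_add_of_nonneg_right
          (sum_nonneg fun e he => hw' e (mem_union_left _ (mem_inter.mp he).1))

lemma card_incidentEdges_lt {v : V} (hv : v ∈ S) : #(incidentEdges G S v) < #S := by
  have : incidentEdges G S v ⊆ (S.erase v).image (fun u => s(v, u)) := by
    intro e he
    obtain ⟨he, hve⟩ := mem_filter.mp he
    obtain ⟨heG, heS⟩ := mem_edgesIn.mp he
    exact mem_image.mpr ⟨Sym2.Mem.other hve, mem_erase.mpr
      ⟨Sym2.other_ne (G.not_isDiag_of_mem_edgeSet heG) hve, heS _ (Sym2.other_mem hve)⟩,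
      Sym2.other_spec hve⟩
  calc #(incidentEdges G S v) ≤ #(S.erase v) := (card_le_card this).trans card_image_le
    _ < #S := card_erase_lt_of_mem hv

lemma wdeg_le_card_mul (hW : ∀ e ∈ G.edgeSet, w e ≤ W) (v : V) :
    wdeg G w S v ≤ #(incidentEdges G S v) * W := by
  rw [← nsmul_eq_mul, ← sum_const]
  exact sum_le_sum fun e he => hW e (mem_edgesIn.mp (mem_filter.mp he).1).1

lemma sum_wdeg_eq_two_mul_wsum : ∑ v ∈ S, wdeg G w S v = 2 * wsum G w S := by
  simp only [wdeg, sum_filter]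
  rw [sum_comm, wsum, mul_sum]
  refine sum_congr rfl fun e he => ?_
  induction e using Sym2.ind with
  | _ p q =>
  obtain ⟨hpq, hp, hq⟩ := mk_mem_edgesIn.mp he
  rw [← sum_filter, show S.filter (· ∈ s(p, q)) = {p, q} by ext; aesop,
    sum_pair hpq.ne, two_mul]

lemma two_mul_wsum_le (hW : ∀ e ∈ G.edgeSet, w e ≤ W) (hW0 : 0 ≤ W) :
    2 * wsum G w S ≤ #S * ((#S : ℝ) - 1) * W := by
  rw [← sum_wdeg_eq_two_mul_wsum, mul_assoc, ← nsmul_eq_mul, ← sum_const]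
  refine sum_le_sum fun v hv => (wdeg_le_card_mul hW v).trans ?_
  have : (#(incidentEdges G S v) : ℝ) + 1 ≤ #S := by
    exact_mod_cast card_incidentEdges_lt hv
  gcongr
  linarith

lemma ceil_div_lt_card_of_lt_wdeg (hW : ∀ e ∈ G.edgeSet, w e ≤ W) (hW0 : 0 < W) {v : V}
    (hv : v ∈ S) (h : d < wdeg G w S v) : ⌈d / W⌉₊ < #S := by
  refine lt_of_le_of_lt ?_ (card_incidentEdges_lt (G := G) hv)
  rw [Nat.ceil_le, div_le_iff₀ hW0]
  exact h.le.trans (wdeg_le_card_mul hW v)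

/-- Every weighted degree in `G[S]` is at most `(|S| - 1) W < d`. -/
lemma two_mul_wsum_lt_of_card_le_ceil (hW : ∀ e ∈ G.edgeSet, w e ≤ W) (hW0 : 0 < W)
    (hS : S.Nonempty) (h : #S ≤ ⌈d / W⌉₊) : 2 * wsum G w S < d * #S := by
  have hS' : (0 : ℝ) < #S := by exact_mod_cast hS.card_pos
  have hd : 0 < d / W := Nat.one_le_ceil_iff.mp (hS.card_pos.trans_le h)
  have hceil : ((⌈d / W⌉₊ : ℕ) : ℝ) < d / W + 1 := Nat.ceil_lt_add_one hd.le
  have : ((#S : ℝ) - 1) * W < d := by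
    have : (#S : ℝ) ≤ ⌈d / W⌉₊ := by exact_mod_cast h
    rw [← lt_div_iff₀ hW0]; linarith
  calc 2 * wsum G w S ≤ #S * ((#S : ℝ) - 1) * W := two_mul_wsum_le hW hW0.le
    _ < d * #S := by rw [mul_assoc, mul_comm]; exact mul_lt_mul_of_pos_right this hS'

lemma ceil_div_lt_card_of_le_wsum (hW : ∀ e ∈ G.edgeSet, w e ≤ W) (hW0 : 0 < W) (hd : 0 < d)
    (hS : ⌈d / W⌉₊ ≤ #S) (hwS : d * (#S - (⌈d / W⌉₊ / 2 : ℕ)) ≤ wsum G w S) :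
    ⌈d / W⌉₊ < #S := by
  refine hS.lt_of_ne fun hSm => ?_
  have hne : S.Nonempty := card_pos.mp (hSm ▸ Nat.one_le_ceil_iff.mpr (div_pos hd hW0))
  have hsmall := two_mul_wsum_lt_of_card_le_ceil hW hW0 hne hSm.ge
  have hhalf : ((⌈d / W⌉₊ / 2 : ℕ) : ℝ) ≤ ⌈d / W⌉₊ / 2 := Nat.cast_div_le
  rw [← hSm] at hwS hsmall
  nlinarith

structure IsSeparation (G : SimpleGraph V) (U A B : Finset V) : Prop where
  union_eq : A ∪ B = U
  nonempty_left : (A \ B).Nonempty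
  nonempty_right : (B \ A).Nonempty
  edgesIn_subset : edgesIn G U ⊆ edgesIn G A ∪ edgesIn G B

lemma IsSeparation.symm (h : IsSeparation G U A B) : IsSeparation G U B A :=
  ⟨by rw [union_comm, h.union_eq], h.nonempty_right, h.nonempty_left,
    union_comm (edgesIn G A) _ ▸ h.edgesIn_subset⟩

lemma IsSeparation.ssubset (h : IsSeparation G U A B) : A ⊂ U := by
  obtain ⟨b, hb⟩ := h.nonempty_right
  rw [← h.union_eq]
  exact ssubset_of_subset_of_ne subset_union_left fun hA =>
    (mem_sdiff.mp hb).2 (hA ▸ mem_union_right _ (mem_sdiff.mp hb).1)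

lemma IsSeparation.incidentEdges_eq {a : V} (h : IsSeparation G U A B) (ha : a ∈ A \ B) :
    incidentEdges G A a = incidentEdges G U a := by
  refine (filter_subset_filter _ (edgesIn_mono h.ssubset.subset)).antisymm
    fun e he => ?_
  obtain ⟨he, hae⟩ := mem_filter.mp he
  refine mem_filter.mpr ⟨?_, hae⟩
  rcases mem_union.mp (h.edgesIn_subset he) with heA | heB
  · exact heA
  · exact absurd ((mem_edgesIn.mp heB).2 a hae) (mem_sdiff.mp ha).2

lemma exists_isSeparation_of_not_vertexConnected (hk : k + 1 ≤ #U)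
    (h : ¬ VertexConnected G U k) : ∃ A B, IsSeparation G U A B ∧ #(A ∩ B) < k := by
  simp only [VertexConnected, hk, true_and, not_forall] at h
  obtain ⟨D, hDU, hDk, hD⟩ := h
  set R : Set V := ((U \ D : Finset V) : Set V)
  have hR : (U \ D).Nonempty := by
    rw [← card_pos, card_sdiff_of_subset hDU]
    omega
  obtain ⟨a, b, hab⟩ : ∃ a b : R, ¬ (G.induce R).Reachable a b := by
    by_contra! hreach
    exact hD ((SimpleGraph.connected_iff _).mpr ⟨hreach, ⟨⟨hR.choose, hR.choose_spec⟩⟩⟩)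
  set C : Finset V := (U \ D).filter fun z => ∃ hz : z ∈ R, (G.induce R).Reachable a ⟨z, hz⟩
  have haC : (a : V) ∈ C := mem_filter.mpr ⟨a.2, a.2, .rfl⟩
  have hbC : (b : V) ∉ C := fun hb => hab (mem_filter.mp hb).2.2
  have hCU : C ⊆ U := (filter_subset _ _).trans sdiff_subset
  have hC_closed : ∀ p ∈ C, ∀ q ∈ U \ D, G.Adj p q → q ∈ C := by
    intro p hp q hq hpq
    obtain ⟨_, _, hap⟩ := mem_filter.mp hp
    exact mem_filter.mpr ⟨hq, hq, hap.trans (SimpleGraph.Adj.reachable hpq)⟩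
  refine ⟨C ∪ D, U \ C, ⟨?_, ?_, ?_, ?_⟩, ?_⟩
  · ext z
    have := @hCU z
    have := @hDU z
    simp only [mem_union, mem_sdiff]
    tauto
  · exact ⟨a, mem_sdiff.mpr ⟨mem_union_left _ haC, fun h => (mem_sdiff.mp h).2 haC⟩⟩
  · refine ⟨b, mem_sdiff.mpr ⟨mem_sdiff.mpr ⟨(mem_sdiff.mp b.2).1, hbC⟩, ?_⟩⟩
    rw [mem_union, not_or]
    exact ⟨hbC, (mem_sdiff.mp b.2).2⟩
  · intro e he
    induction e using Sym2.ind with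
    | _ p q =>
    obtain ⟨hpq, hp, hq⟩ := mk_mem_edgesIn.mp he
    have hpC := fun hqC => hC_closed q hqC p
    have hqC := fun hpC => hC_closed p hpC q
    simp only [mem_union, mk_mem_edgesIn, mem_sdiff] at hpC hqC ⊢
    have := hpq.symm
    tauto
  · refine lt_of_le_of_lt (card_le_card fun z hz => ?_) hDk
    simp only [mem_inter, mem_union, mem_sdiff] at hz
    tauto

lemma le_wsum_erase {c : ℝ} {v : V} (hv : v ∈ U) (hdeg : wdeg G w U v ≤ d)
    (hwU : d * (#U - c) ≤ wsum G w U) : d * (#(U.erase v) - c) ≤ wsum G w (U.erase v) := by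
  rw [wsum_erase, card_erase_of_mem hv, Nat.cast_sub (card_pos.mpr ⟨v, hv⟩), Nat.cast_one]
  linarith

lemma IsSeparation.le_wsum_or_le_wsum {c : ℕ} (h : IsSeparation G U A B)
    (hw : ∀ e ∈ G.edgeSet, 0 ≤ w e) (hd : 0 ≤ d) (hAB : #(A ∩ B) ≤ c)
    (hwU : d * (#U - c) ≤ wsum G w U) :
    d * (#A - c) ≤ wsum G w A ∨ d * (#B - c) ≤ wsum G w B := by
  by_contra! hlt
  have hcard : (#A : ℝ) + #B = #U + #(A ∩ B) := by
    rw [← h.union_eq]; exact_mod_cast (card_union_add_card_inter A B).symm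
  have : d * #(A ∩ B) ≤ d * c := by gcongr
  have hsplit := wsum_le_add_of_subset_union hw h.edgesIn_subset
  nlinarith

lemma exists_vertexConnected_subset (hw : ∀ e ∈ G.edgeSet, 0 ≤ w e)
    (hW : ∀ e ∈ G.edgeSet, w e ≤ W) (hW0 : 0 < W) (hd : 0 < d) (U : Finset V)
    (hU : ⌈d / W⌉₊ < #U) (hwU : d * (#U - (⌈d / W⌉₊ / 2 : ℕ)) ≤ wsum G w U) :
    ∃ S ⊆ U, S.Nonempty ∧ VertexConnected G S (⌈d / W⌉₊ / 2 + 1) ∧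
      ∀ v ∈ S, d < wdeg G w S v := by
  have hm1 : 1 ≤ ⌈d / W⌉₊ := Nat.one_le_ceil_iff.mpr (div_pos hd hW0)
  generalize hm : ⌈d / W⌉₊ = m at hm1 hU hwU ⊢
  induction U using Finset.strongInduction with
  | H U ih =>
  by_cases hlow : ∃ v ∈ U, wdeg G w U v ≤ d
  · obtain ⟨v, hv, hvd⟩ := hlow
    have hwU' := le_wsum_erase hv hvd hwU
    have hU' : m < #(U.erase v) := hm ▸ ceil_div_lt_card_of_le_wsum hW hW0 hd
      (by rw [hm, card_erase_of_mem hv]; omega) (hm ▸ hwU')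
    obtain ⟨S, hSU, hS⟩ := ih _ (erase_ssubset hv) hU' hwU'
    exact ⟨S, hSU.trans (erase_subset v U), hS⟩
  push Not at hlow
  by_cases hconn : VertexConnected G U (m / 2 + 1)
  · exact ⟨U, Subset.rfl, card_pos.mp (by omega), hconn, hlow⟩
  obtain ⟨A, B, hsep, hAB⟩ := exists_isSeparation_of_not_vertexConnected (by omega) hconn
  suffices key : ∀ A B, IsSeparation G U A B → d * (#A - (m / 2 : ℕ)) ≤ wsum G w A →
      ∃ S ⊆ U, S.Nonempty ∧ VertexConnected G S (m / 2 + 1) ∧ ∀ v ∈ S, d < wdeg G w S v by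
    rcases hsep.le_wsum_or_le_wsum hw hd.le (Nat.le_of_lt_succ hAB) hwU with hA | hB
    · exact key A B hsep hA
    · exact key B A hsep.symm hB
  intro A B hsep hwA
  obtain ⟨a, ha⟩ := hsep.nonempty_left
  have hA : m < #A := by
    refine hm ▸ ceil_div_lt_card_of_lt_wdeg hW hW0 (mem_sdiff.mp ha).1 ?_
    rw [wdeg, ← incidentEdges, hsep.incidentEdges_eq ha]
    exact hlow a (hsep.union_eq ▸ mem_union_left _ (mem_sdiff.mp ha).1)
  obtain ⟨S, hSA, hS⟩ := ih A hsep.ssubset hA hwA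
  exact ⟨S, hSA.trans hsep.ssubset.subset, hS⟩

/-- Theorem (generalized Mader): if the edge-weighted graph `G` has density at least `d > 0`,
then there is a nonempty `S ⊆ V` such that `G[S]` is `(⌊⌈d/wmax⌉/2⌋ + 1)`-vertex-connected
and every vertex of `G[S]` has weighted degree greater than `d` in `G[S]`. -/
theorem mader_weighted (G : SimpleGraph V) (w : Sym2 V → ℝ)
    (hE : (edgesIn G Finset.univ).Nonempty)
    (hw : ∀ e ∈ G.edgeSet, 0 < w e)
    (d : ℝ) (hd : 0 < d)
    (hdens : density G w Finset.univ ≥ d) :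
    ∃ S : Finset V, S.Nonempty ∧
      VertexConnected G S (⌈d / (edgesIn G Finset.univ).sup' hE w⌉₊ / 2 + 1) ∧
      ∀ v ∈ S, d < wdeg G w S v := by
  set W := (edgesIn G Finset.univ).sup' hE w
  have hW : ∀ e ∈ G.edgeSet, w e ≤ W := fun e he =>
    le_sup' w (mem_edgesIn.mpr ⟨he, fun _ _ => mem_univ _⟩)
  obtain ⟨e₀, he₀⟩ := hE
  have hW0 : 0 < W := (hw e₀ (mem_edgesIn.mp he₀).1).trans_le (hW e₀ (mem_edgesIn.mp he₀).1)
  have hV : (univ : Finset V).Nonempty := ⟨e₀.out.1, mem_univ _⟩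
  have hV' : (0 : ℝ) < #(univ : Finset V) := by exact_mod_cast hV.card_pos
  have hdV : d * #(univ : Finset V) ≤ wsum G w univ := by
    rwa [density, ge_iff_le, le_div_iff₀ hV'] at hdens
  have hU : ⌈d / W⌉₊ < #(univ : Finset V) := by
    by_contra! h
    have := two_mul_wsum_lt_of_card_le_ceil hW hW0 hV h
    nlinarith
  have hwU : d * (#(univ : Finset V) - (⌈d / W⌉₊ / 2 : ℕ)) ≤ wsum G w univ :=
    le_trans (by gcongr; exact sub_le_self _ (Nat.cast_nonneg _)) hdV
  obtain ⟨S, -, hS⟩ :=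
    exists_vertexConnected_subset (fun e he => (hw e he).le) hW hW0 hd univ hU hwU
  exact ⟨S, hS⟩
end
end

section
/- Let G=(V,E,w) be an edge-weighted graph with E≠∅ and let d be a positive real with d(V) ≥ d; set r = ⌈d/w_max⌉. Among all subsets S ⊆ V satisfying |S| ≥ r and w(S) > d(V)·(|S| − r/2), let S be one of minimum cardinality (such a subset exists, since V itself satisfies these conditions). Then |S| ≥ r + 1 and every vertex of G[S] has weighted degree strictly greater than d(V) in G[S]. -/
open Finset
open scoped Classical

noncomputable section

variable {V : Type*} [Fintype V] [DecidableEq V]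

/-- The edge-weighted graph `G[S]` is `k`-edge-connected: it is connected, and every set `F`
of its edges whose removal disconnects it has total weight at least `k`. -/
def EdgeConnected (G : SimpleGraph V) (w : Sym2 V → ℝ) (S : Finset V) (k : ℝ) : Prop :=
  (G.induce (S : Set V)).Connected ∧
  ∀ F : Finset (Sym2 V), F ⊆ edgesIn G S →
    ¬ ((G.deleteEdges (F : Set (Sym2 V))).induce (S : Set V)).Connected →
    k ≤ ∑ e ∈ F, w e

/-!
Deleting a vertex `v` from `S` lowers `w(S)` by the weighted degree of `v` in `G[S]` and `|S|` by
one, so if that degree were at most `d(V)` the smaller set would still satisfy the weight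
condition, against minimality. And `|S| = r` is impossible: then `w(S) ≤ C(r,2)·w_max ≤ d·r/2`
because `(r - 1)·w_max < d` by the choice of `r`, while the weight condition asks for
`w(S) > d(V)·r/2 ≥ d·r/2`.
-/

lemma edgesIn_mono_s13 (G : SimpleGraph V) {S T : Finset V} (hST : S ⊆ T) :
    edgesIn G S ⊆ edgesIn G T := by
  intro e he
  simp only [edgesIn, mem_filter, mem_univ, true_and] at he ⊢
  exact ⟨he.1, fun v hv => hST (he.2 v hv)⟩

lemma edgesIn_erase (G : SimpleGraph V) (S : Finset V) (v : V) :
    edgesIn G (S.erase v) = (edgesIn G S).filter (fun e => v ∉ e) := by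
  ext e
  simp only [edgesIn, mem_filter, mem_univ, true_and, mem_erase]
  constructor
  · rintro ⟨he, h⟩
    exact ⟨⟨he, fun u hu => (h u hu).2⟩, fun hv => (h v hv).1 rfl⟩
  · rintro ⟨⟨he, h⟩, hv⟩
    exact ⟨he, fun u hu => ⟨fun huv => hv (huv ▸ hu), h u hu⟩⟩

lemma wsum_eq_wsum_erase_add_wdeg (G : SimpleGraph V) (w : Sym2 V → ℝ) (S : Finset V) (v : V) :
    wsum G w S = wsum G w (S.erase v) + wdeg G w S v := by
  rw [wsum, wsum, wdeg, edgesIn_erase, add_comm]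
  exact (sum_filter_add_sum_filter_not (edgesIn G S) (fun e => v ∈ e) w).symm

lemma card_edgesIn_le_choose_two (G : SimpleGraph V) (S : Finset V) :
    #(edgesIn G S) ≤ (#S).choose 2 := by
  rw [← Sym2.card_image_offDiag S]
  refine card_le_card fun e he => ?_
  simp only [edgesIn, mem_filter, mem_univ, true_and] at he
  obtain ⟨he, hmem⟩ := he
  induction e with
  | _ a b =>
    rw [SimpleGraph.mem_edgeSet] at he
    exact mem_image.mpr ⟨(a, b), mem_offDiag.mpr ⟨hmem a (by simp), hmem b (by simp), he.ne⟩, rfl⟩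

lemma wsum_le_choose_two_mul (G : SimpleGraph V) (w : Sym2 V → ℝ) (S : Finset V) {M : ℝ}
    (hM : ∀ e ∈ edgesIn G S, w e ≤ M) (hM₀ : 0 ≤ M) :
    wsum G w S ≤ (#S).choose 2 * M :=
  calc wsum G w S ≤ #(edgesIn G S) • M := sum_le_card_nsmul _ _ _ hM
    _ = #(edgesIn G S) * M := nsmul_eq_mul _ _
    _ ≤ (#S).choose 2 * M := by
      gcongr
      exact_mod_cast card_edgesIn_le_choose_two G S

lemma choose_two_ceil_div_mul_le (d : ℝ) {M : ℝ} (hM : 0 ≤ M) :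
    (⌈d / M⌉₊.choose 2 : ℝ) * M ≤ d * ⌈d / M⌉₊ / 2 := by
  set r := ⌈d / M⌉₊
  rcases Nat.eq_zero_or_pos r with hr | hr
  · simp [hr]
  have hdM : 0 < d / M := Nat.ceil_pos.mp hr
  have hM₀ : 0 < M := lt_of_le_of_ne hM fun h => by simp [← h] at hdM
  have hlt : (r : ℝ) - 1 < d / M := by linarith [Nat.ceil_lt_add_one hdM.le]
  have hr_sub : ((r : ℝ) - 1) * M ≤ d := ((lt_div_iff₀ hM₀).mp hlt).le
  rw [Nat.cast_choose_two]
  calc (r : ℝ) * (r - 1) / 2 * M = r / 2 * ((r - 1) * M) := by ring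
    _ ≤ r / 2 * d := by gcongr
    _ = d * r / 2 := by ring

lemma lt_wsum_erase_of_wdeg_le (G : SimpleGraph V) (w : Sym2 V → ℝ) {S : Finset V} {v : V}
    {ρ c : ℝ} (hS : ρ * (#S - c) < wsum G w S) (hv : v ∈ S) (hdeg : wdeg G w S v ≤ ρ) :
    ρ * (#(S.erase v) - c) < wsum G w (S.erase v) := by
  have hcard : (#(S.erase v) : ℝ) = #S - 1 := by
    rw [card_erase_of_mem hv, Nat.cast_pred (card_pos.mpr ⟨v, hv⟩)]
  rw [hcard]
  linarith [wsum_eq_wsum_erase_add_wdeg G w S v]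

theorem minimal_subset_min_degree_general (G : SimpleGraph V) (w : Sym2 V → ℝ)
    (hE : (edgesIn G Finset.univ).Nonempty)
    (hw : ∀ e ∈ G.edgeSet, 0 < w e)
    (d : ℝ)
    (hdens : density G w Finset.univ ≥ d)
    (S : Finset V)
    (hScard : ⌈d / (edgesIn G Finset.univ).sup' hE w⌉₊ ≤ S.card)
    (hSw : density G w Finset.univ *
        ((S.card : ℝ) - (⌈d / (edgesIn G Finset.univ).sup' hE w⌉₊ : ℝ) / 2) < wsum G w S)
    (hSmin : ∀ T : Finset V,
      ⌈d / (edgesIn G Finset.univ).sup' hE w⌉₊ ≤ T.card →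
      density G w Finset.univ *
          ((T.card : ℝ) - (⌈d / (edgesIn G Finset.univ).sup' hE w⌉₊ : ℝ) / 2) < wsum G w T →
      S.card ≤ T.card) :
    ⌈d / (edgesIn G Finset.univ).sup' hE w⌉₊ + 1 ≤ S.card ∧
      ∀ v ∈ S, density G w Finset.univ < wdeg G w S v := by
  set wmax := (edgesIn G univ).sup' hE w
  set r := ⌈d / wmax⌉₊
  have hwmax : 0 ≤ wmax := by
    obtain ⟨e, he⟩ := hE
    exact (hw e (mem_filter.mp he).2.1).le.trans (le_sup' w he)
  have hcard : r + 1 ≤ #S := by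
    refine lt_of_le_of_ne hScard fun hr => ?_
    have hwS := wsum_le_choose_two_mul G w S
      (fun e he => le_sup' w (edgesIn_mono_s13 G (subset_univ S) he)) hwmax
    rw [← hr] at hSw hwS
    have hρ := mul_le_mul_of_nonneg_right hdens (by positivity : (0 : ℝ) ≤ r / 2)
    linarith [choose_two_ceil_div_mul_le d hwmax]
  refine ⟨hcard, fun v hv => ?_⟩
  by_contra! hdeg
  have hle := hSmin (S.erase v) (by rw [card_erase_of_mem hv]; omega)
    (lt_wsum_erase_of_wdeg_le G w hSw hv hdeg)
  exact (card_erase_lt_of_mem hv).not_ge hle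

/-- If `d(V) ≥ d > 0`, `r = ⌈d/wmax⌉`, and `S` is a minimum-cardinality subset among those
satisfying `|S| ≥ r` and `w(S) > d(V)·(|S| - r/2)`, then `|S| ≥ r+1` and every vertex of
`G[S]` has weighted degree greater than `d(V)` in `G[S]`. -/
theorem minimal_subset_min_degree (G : SimpleGraph V) (w : Sym2 V → ℝ)
    (hE : (edgesIn G Finset.univ).Nonempty)
    (hw : ∀ e ∈ G.edgeSet, 0 < w e)
    (d : ℝ) (hd : 0 < d)
    (hdens : density G w Finset.univ ≥ d)
    (S : Finset V)
    (hScard : ⌈d / (edgesIn G Finset.univ).sup' hE w⌉₊ ≤ S.card)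
    (hSw : density G w Finset.univ *
        ((S.card : ℝ) - (⌈d / (edgesIn G Finset.univ).sup' hE w⌉₊ : ℝ) / 2) < wsum G w S)
    (hSmin : ∀ T : Finset V,
      ⌈d / (edgesIn G Finset.univ).sup' hE w⌉₊ ≤ T.card →
      density G w Finset.univ *
          ((T.card : ℝ) - (⌈d / (edgesIn G Finset.univ).sup' hE w⌉₊ : ℝ) / 2) < wsum G w T →
      S.card ≤ T.card) :
    ⌈d / (edgesIn G Finset.univ).sup' hE w⌉₊ + 1 ≤ S.card ∧
      ∀ v ∈ S, density G w Finset.univ < wdeg G w S v :=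
  minimal_subset_min_degree_general G w hE hw d hdens S hScard hSw hSmin
end
end
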